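/- arXiv:1906.03830 — 2 statements merged into one kernel-verified Lean document; each statement's English description precedes it below -/
import Mathlib

section
/- Fundamental identity of SMD: if w_i satisfies ∇ψ(w_i) = ∇ψ(w_{i-1}) - η ∇L_i(w_{i-1}), then for any w with L_i(w) = 0, it holds that D_ψ(w, w_{i-1}) = D_ψ(w, w_i) + D_{ψ - ηL_i}(w_i, w_{i-1}) + η L_i(w_i) + η D_{L_i}(w, w_{i-1}). -/
/-! The mirror step `∇ψ(wᵢ) = ∇ψ(wᵢ₋₁) - η∇Lᵢ(wᵢ₋₁)` says exactly that `∇(ψ - ηLᵢ)(wᵢ₋₁) = ∇ψ(wᵢ)`.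
Feeding this into the three-point identity of Bregman divergences,
`D_ψ(w, a) = D_ψ(w, b) + D_ψ(b, a) + ⟪∇ψ(b) - ∇ψ(a), w - b⟫`, and using `Lᵢ(w) = 0`
to trade `-η⟪∇Lᵢ(wᵢ₋₁), w - wᵢ⟫` for Bregman terms of `Lᵢ`, gives the identity. -/

open scoped RealInnerProductSpace

variable {F : Type*} [NormedAddCommGroup F] [InnerProductSpace ℝ F] [CompleteSpace F]

noncomputable def bregmanDiv (f : F → ℝ) (x y : F) : ℝ :=
  f x - f y - ⟪gradient f y, x - y⟫

theorem bregmanDiv_three_point (f : F → ℝ) (w a b : F) :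
    bregmanDiv f w a =
      bregmanDiv f w b + bregmanDiv f b a + ⟪gradient f b - gradient f a, w - b⟫ := by
  simp only [bregmanDiv, inner_sub_left, inner_sub_right]
  ring

theorem gradient_sub_const_mul {f g : F → ℝ} {x : F} (hf : DifferentiableAt ℝ f x)
    (hg : DifferentiableAt ℝ g x) (c : ℝ) :
    gradient (fun u => f u - c * g u) x = gradient f x - c • gradient g x := by
  have h := hf.hasGradientAt.hasFDerivAt.sub (hg.hasGradientAt.hasFDerivAt.const_mul c)
  rw [← map_smul, ← map_sub] at h
  exact (hasGradientAt_iff_hasFDerivAt.mpr h).gradient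

theorem smd_fundamental_identity_general
    (p : ℕ) (ψ L : EuclideanSpace ℝ (Fin p) → ℝ)
    (hψ : Differentiable ℝ ψ) (hL : Differentiable ℝ L)
    (η : ℝ)
    (wprev wi w : EuclideanSpace ℝ (Fin p))
    (hupdate : gradient ψ wi = gradient ψ wprev - η • gradient L wprev)
    (hw : L w = 0) :
    ψ w - ψ wprev - ⟪gradient ψ wprev, w - wprev⟫ =
      (ψ w - ψ wi - ⟪gradient ψ wi, w - wi⟫)
      + ((ψ wi - η * L wi) - (ψ wprev - η * L wprev)
          - ⟪gradient (fun u => ψ u - η * L u) wprev, wi - wprev⟫)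
      + η * L wi
      + η * (L w - L wprev - ⟪gradient L wprev, w - wprev⟫) := by
  have hstep : gradient (fun u => ψ u - η * L u) wprev = gradient ψ wi := by
    rw [gradient_sub_const_mul (hψ wprev) (hL wprev), hupdate]
  change bregmanDiv ψ w wprev = bregmanDiv ψ w wi + bregmanDiv (fun u => ψ u - η * L u) wi wprev
    + η * L wi + η * bregmanDiv L w wprev
  rw [bregmanDiv_three_point ψ w wprev wi]
  simp only [bregmanDiv, hstep, hupdate, hw, inner_sub_left, inner_sub_right, inner_smul_left,
    RCLike.conj_to_real]
  ring

theorem smd_fundamental_identity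
    (p : ℕ) (ψ L : EuclideanSpace ℝ (Fin p) → ℝ)
    (hψ : Differentiable ℝ ψ) (hL : Differentiable ℝ L)
    (hLnonneg : ∀ u, 0 ≤ L u)
    (η : ℝ) (hη : 0 < η)
    (wprev wi w : EuclideanSpace ℝ (Fin p))
    (hupdate : gradient ψ wi = gradient ψ wprev - η • gradient L wprev)
    (hw : L w = 0) :
    ψ w - ψ wprev - ⟪gradient ψ wprev, w - wprev⟫ =
      (ψ w - ψ wi - ⟪gradient ψ wi, w - wi⟫)
      + ((ψ wi - η * L wi) - (ψ wprev - η * L wprev)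
          - ⟪gradient (fun u => ψ u - η * L u) wprev, wi - wprev⟫)
      + η * L wi
      + η * (L w - L wprev - ⟪gradient L wprev, w - wprev⟫) :=
  smd_fundamental_identity_general p ψ L hψ hL η wprev wi w hupdate hw
end

section
/- Telescoping bound for SMD: under the assumptions that all iterates remain in the region where D_{L_i}(w, ·) ≥ 0, L_i(w) = 0 for all i, and ψ - ηL_i convex for all i, the sum Σ_{k=1}^T [D_{ψ-ηL_{i_k}}(w_k, w_{k-1}) + η L_{i_k}(w_k) + η D_{L_{i_k}}(w, w_{k-1})] is bounded above by D_ψ(w, w_0) for every T; in particular each of the three (nonnegative) summand series converges. -/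
open scoped RealInnerProductSpace

/-!
Along an SMD step the mirror-descent update and `L_i(w) = 0` make the summand at step `k`
*equal* to `D_ψ(w, w_k) - D_ψ(w, w_{k+1})`, so the partial sums telescope to
`D_ψ(w, w_0) - D_ψ(w, w_T) ≤ D_ψ(w, w_0)`. Each of the three parts of the summand is
nonnegative (convexity of `ψ - ηL_i`, `L_i ≥ 0`, and the hypothesis on `D_{L_i}`), so each
part has bounded partial sums and is summable.
-/

open Finset

/-- The Bregman divergence `D_f(a, b)` of `f`, with base point `b`. -/
noncomputable def bregman {E : Type*} [NormedAddCommGroup E] [InnerProductSpace ℝ E]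
    [CompleteSpace E] (f : E → ℝ) (a b : E) : ℝ :=
  f a - f b - ⟪gradient f b, a - b⟫

theorem ConvexOn.fderiv_sub_le {E : Type*} [NormedAddCommGroup E] [NormedSpace ℝ E]
    {f : E → ℝ} {s : Set E} {x y : E} (hf : ConvexOn ℝ s f) (hx : x ∈ s) (hy : y ∈ s)
    (hdf : DifferentiableAt ℝ f x) :
    fderiv ℝ f x (y - x) ≤ f y - f x := by
  let γ : ℝ →ᵃ[ℝ] E := AffineMap.lineMap x y
  have hγ0 : γ 0 = x := AffineMap.lineMap_apply_zero x y
  have hγ1 : γ 1 = y := AffineMap.lineMap_apply_one x y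
  have hconv : ConvexOn ℝ (Set.Icc 0 1) (f ∘ γ) :=
    (hf.comp_affineMap γ).subset (fun _ ht => hf.1.lineMap_mem hx hy ht) (convex_Icc 0 1)
  have hderiv : HasDerivAt (f ∘ γ) (fderiv ℝ f x (y - x)) 0 :=
    hdf.hasFDerivAt.comp_hasDerivAt_of_eq 0
      AffineMap.hasStrictDerivAt_lineMap.hasDerivAt hγ0.symm
  simpa [slope, hγ0, hγ1] using hconv.le_slope_of_hasDerivAt (by simp) (by simp) one_pos hderiv

section Bregman

variable {E : Type*} [NormedAddCommGroup E] [InnerProductSpace ℝ E] [CompleteSpace E]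

theorem ConvexOn.bregman_nonneg {f : E → ℝ} {s : Set E} {a b : E} (hf : ConvexOn ℝ s f)
    (ha : a ∈ s) (hb : b ∈ s) (hdf : DifferentiableAt ℝ f b) : 0 ≤ bregman f a b := by
  have hsupport := hf.fderiv_sub_le hb ha hdf
  rw [bregman, inner_gradient_left]
  linarith

theorem inner_gradient_sub_const_mul {ψ L : E → ℝ} {x : E} (hψ : DifferentiableAt ℝ ψ x)
    (hL : DifferentiableAt ℝ L x) (η : ℝ) (v : E) :
    ⟪gradient (fun u => ψ u - η * L u) x, v⟫ = ⟪gradient ψ x, v⟫ - η * ⟪gradient L x, v⟫ := by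
  simp only [inner_gradient_left, fderiv_fun_sub hψ (hL.const_mul η), fderiv_const_mul hL,
    sub_apply, smul_apply, smul_eq_mul]

theorem bregman_mirror_step {ψ L : E → ℝ} {x x' w : E} {η : ℝ} (hψ : DifferentiableAt ℝ ψ x)
    (hL : DifferentiableAt ℝ L x) (hw : L w = 0)
    (hstep : gradient ψ x' = gradient ψ x - η • gradient L x) :
    bregman (fun u => ψ u - η * L u) x' x + η * L x' + η * bregman L w x
      = bregman ψ w x - bregman ψ w x' := by
  simp only [bregman, inner_gradient_sub_const_mul hψ hL, hstep, hw, inner_sub_left,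
    inner_sub_right, real_inner_smul_left]
  ring

end Bregman

theorem summable_of_le_of_sum_range_le {f g : ℕ → ℝ} {c : ℝ} (hf : ∀ k, 0 ≤ f k)
    (hfg : ∀ k, f k ≤ g k) (hg : ∀ T, ∑ k ∈ range T, g k ≤ c) : Summable f :=
  summable_of_sum_range_le hf fun T => (sum_le_sum fun k _ => hfg k).trans (hg T)

theorem smd_telescoping_bound
    (p n : ℕ) (ψ : EuclideanSpace ℝ (Fin p) → ℝ)
    (L : Fin n → EuclideanSpace ℝ (Fin p) → ℝ)
    (hψ : Differentiable ℝ ψ)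
    (hψconv : StrictConvexOn ℝ Set.univ ψ)
    (hL : ∀ i, Differentiable ℝ (L i))
    (hLnonneg : ∀ i u, 0 ≤ L i u)
    (w : EuclideanSpace ℝ (Fin p))
    (hw : ∀ i, L i w = 0)
    (η : ℝ) (hη : 0 < η)
    (hconv : ∀ i, ConvexOn ℝ Set.univ (fun u => ψ u - η * L i u))
    (idx : ℕ → Fin n)
    (iter : ℕ → EuclideanSpace ℝ (Fin p))
    (hupdate : ∀ k : ℕ, gradient ψ (iter (k + 1)) =
      gradient ψ (iter k) - η • gradient (L (idx k)) (iter k))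
    (hDL : ∀ k : ℕ,
      0 ≤ L (idx k) w - L (idx k) (iter k)
          - ⟪gradient (L (idx k)) (iter k), w - iter k⟫) :
    (∀ T : ℕ,
      (∑ k ∈ Finset.range T,
        (((ψ (iter (k + 1)) - η * L (idx k) (iter (k + 1)))
            - (ψ (iter k) - η * L (idx k) (iter k))
            - ⟪gradient (fun u => ψ u - η * L (idx k) u) (iter k),
                iter (k + 1) - iter k⟫)
          + η * L (idx k) (iter (k + 1))
          + η * (L (idx k) w - L (idx k) (iter k)
              - ⟪gradient (L (idx k)) (iter k), w - iter k⟫)))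
        ≤ ψ w - ψ (iter 0) - ⟪gradient ψ (iter 0), w - iter 0⟫) ∧
    Summable (fun k : ℕ =>
      (ψ (iter (k + 1)) - η * L (idx k) (iter (k + 1)))
        - (ψ (iter k) - η * L (idx k) (iter k))
        - ⟪gradient (fun u => ψ u - η * L (idx k) u) (iter k),
            iter (k + 1) - iter k⟫) ∧
    Summable (fun k : ℕ => η * L (idx k) (iter (k + 1))) ∧
    Summable (fun k : ℕ =>
      η * (L (idx k) w - L (idx k) (iter k)
          - ⟪gradient (L (idx k)) (iter k), w - iter k⟫)) := by
  have hstep_nonneg k : 0 ≤ bregman (fun u => ψ u - η * L (idx k) u) (iter (k + 1)) (iter k) :=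
    (hconv (idx k)).bregman_nonneg trivial trivial ((hψ _).sub ((hL _ _).const_mul η))
  have hloss_nonneg k : 0 ≤ η * L (idx k) (iter (k + 1)) := mul_nonneg hη.le (hLnonneg _ _)
  have hDL_nonneg k : 0 ≤ η * bregman (L (idx k)) w (iter k) := mul_nonneg hη.le (hDL k)
  have hbound T : ∑ k ∈ range T,
      (bregman (fun u => ψ u - η * L (idx k) u) (iter (k + 1)) (iter k)
        + η * L (idx k) (iter (k + 1)) + η * bregman (L (idx k)) w (iter k))
      ≤ bregman ψ w (iter 0) := by
    rw [sum_congr rfl fun k _ => bregman_mirror_step (hψ _) (hL _ _) (hw _) (hupdate k),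
      sum_range_sub']
    linarith [hψconv.convexOn.bregman_nonneg (Set.mem_univ w) (Set.mem_univ _) (hψ (iter T))]
  refine ⟨hbound, ?_, ?_, ?_⟩
  · exact summable_of_le_of_sum_range_le hstep_nonneg
      (fun k => le_add_of_le_of_nonneg (le_add_of_nonneg_right (hloss_nonneg k)) (hDL_nonneg k))
      hbound
  · exact summable_of_le_of_sum_range_le hloss_nonneg
      (fun k => le_add_of_le_of_nonneg (le_add_of_nonneg_left (hstep_nonneg k)) (hDL_nonneg k))
      hbound
  · exact summable_of_le_of_sum_range_le hDL_nonneg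
      (fun k => le_add_of_nonneg_left (add_nonneg (hstep_nonneg k) (hloss_nonneg k))) hbound
end
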